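/- Energy estimate for the Hermite spectral viscosity scheme with viscosity term ε ∂_x D_x Q_m u (Lemma on apriori estimates): Let α > 0, T > 0, ε > 0, integers 0 < m < N, multipliers q̂_0, …, q̂_N with q̂_k = 0 for k ≤ m and 1 − m/k ≤ q̂_k < 1 for k > m, f ∈ C¹(ℝ) with f(0) = 0 admitting a C¹ primitive F̄ of y ↦ y f'(y), and u₀ ∈ L²(ℝ). Suppose u : [0,T] → R_N is of the form u(t) = Σ_{k=0}^N û_k(t) H_k^α with each û_k differentiable on [0,T], u(0) = P_N u₀, and for every t ∈ [0,T] and every φ ∈ R_N: ∫_ℝ (∂_t u)(t,x) φ(x) dx + ∫_ℝ ∂_x(P_{N+1}(f∘u(t)))(x) φ(x) dx − ε ∫_ℝ ∂_x(D_x Q_m u(t))(x) φ(x) dx = 0. Then for every γ > α²/2, ‖u(T)‖² + 2ε(1 − α²/(2γ)) ∫_0^T ‖D_x Q_m u(t)‖² dt ≤ ‖P_N u₀‖² + ε α² γ ∫_0^T ‖x u(t)‖² dt. -/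

import Mathlib

/-!
Testing the scheme with `φ = u(t)` gives
`½ d/dt ‖u‖² = −(∂ₓ P_{N+1} f(u), u) + ε (∂ₓ D_x Q_m u, u)`.

Every function in sight is a polynomial times a Gaussian, so integrations by parts over `ℝ` have
no boundary terms. The convection term becomes `(P_{N+1} f(u), ∂ₓu) = (f(u), ∂ₓu)`, because
`∂ₓu ∈ R_{N+1}`; this is the integral of the exact derivative `∂ₓ G(u)` with `G' = f`, so it
vanishes. Writing `∂ₓ = D_x − α²x`, the viscosity term becomes
`−(D_x Q_m u, D_x u) + α² (D_x Q_m u, x u)`. As `D_x H_k^α` is a multiple of `H_{k-1}^α`, the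
first part is diagonal in the Hermite coefficients and `0 ≤ q̂_k ≤ 1` bounds it by
`−‖D_x Q_m u‖²`; Young's inequality with weight `γ` bounds the second. Integrating in time gives
the estimate.
-/

open MeasureTheory Real

noncomputable def physHermite (n : ℕ) : ℝ → ℝ :=
  fun x => (-1 : ℝ) ^ n * Real.exp (x ^ 2) * iteratedDeriv n (fun y => Real.exp (-(y ^ 2))) x

noncomputable def genHermite (α : ℝ) (n : ℕ) : ℝ → ℝ :=
  fun x => Real.sqrt (α / (2 ^ n * n.factorial * Real.sqrt Real.pi)) *
    physHermite n (α * x) * Real.exp (-(α ^ 2 * x ^ 2) / 2)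

noncomputable def genHermiteZ (α : ℝ) (n : ℤ) : ℝ → ℝ :=
  fun x => if 0 ≤ n then genHermite α n.toNat x else 0

noncomputable def Dx (α : ℝ) (u : ℝ → ℝ) : ℝ → ℝ :=
  fun x => deriv u x + α ^ 2 * x * u x

noncomputable def SLop (α : ℝ) (u : ℝ → ℝ) : ℝ → ℝ :=
  fun x => -(Real.exp (α ^ 2 * x ^ 2 / 2) *
    deriv (fun y => Real.exp (-(α ^ 2 * y ^ 2)) *
      deriv (fun z => Real.exp (α ^ 2 * z ^ 2 / 2) * u z) y) x)

open Polynomial Filter Topology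

lemma isBounded_range_of_tendsto_atBot_atTop {g : ℝ → ℝ} {a a' : ℝ} (hg : Continuous g)
    (hbot : Tendsto g atBot (𝓝 a)) (htop : Tendsto g atTop (𝓝 a')) :
    Bornology.IsBounded (Set.range g) :=
  hg.isBounded_range_iff_isBigO_atTop_atBot.2 ⟨htop.isBigO_one ℝ, hbot.isBigO_one ℝ⟩

theorem integral_comp_mul_deriv_eq_zero {φ u : ℝ → ℝ} {l : ℝ} (hφ : Continuous φ)
    (hu : Differentiable ℝ u) (hbot : Tendsto u atBot (𝓝 l)) (htop : Tendsto u atTop (𝓝 l))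
    (hint : Integrable fun x => φ (u x) * deriv u x) :
    ∫ x, φ (u x) * deriv u x = 0 := by
  have hΦ (y : ℝ) : HasDerivAt (fun z => ∫ t in (0 : ℝ)..z, φ t) (φ y) y :=
    (hφ.integral_hasStrictDerivAt 0 y).hasDerivAt
  have hΦc : Continuous fun z => ∫ t in (0 : ℝ)..z, φ t :=
    continuous_iff_continuousAt.2 fun y => (hΦ y).continuousAt
  rw [integral_of_hasDerivAt_of_tendsto (fun x => (hΦ (u x)).comp x (hu x).hasDerivAt) hint
    ((hΦc.tendsto l).comp hbot) ((hΦc.tendsto l).comp htop), sub_self]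

lemma integral_mul_le_of_young {g h : ℝ → ℝ} {γ : ℝ} (hγ : 0 < γ)
    (hgh : Integrable fun x => g x * h x) (hg : Integrable fun x => g x ^ 2)
    (hh : Integrable fun x => h x ^ 2) :
    ∫ x, g x * h x ≤ 1 / (2 * γ) * (∫ x, g x ^ 2) + γ / 2 * ∫ x, h x ^ 2 := by
  calc ∫ x, g x * h x ≤ ∫ x, (1 / (2 * γ) * g x ^ 2 + γ / 2 * h x ^ 2) := by
        refine integral_mono hgh ((hg.const_mul _).add (hh.const_mul _)) fun x => ?_
        have hsq : 0 ≤ (g x - γ * h x) ^ 2 / (2 * γ) := by positivity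
        have : (g x - γ * h x) ^ 2 / (2 * γ)
            = 1 / (2 * γ) * g x ^ 2 + γ / 2 * h x ^ 2 - g x * h x := by
          field_simp
          ring
        linarith
    _ = 1 / (2 * γ) * (∫ x, g x ^ 2) + γ / 2 * ∫ x, h x ^ 2 := by
        rw [integral_add (hg.const_mul _) (hh.const_mul _), integral_const_mul, integral_const_mul]

/-! ### Polynomials times Gaussians -/

def IsPolyGaussian (b : ℝ) (f : ℝ → ℝ) : Prop :=
  ∃ p : ℝ[X], ∀ x, f x = p.eval x * exp (-(b * x ^ 2))

lemma hasDerivAt_eval_mul_exp_neg_mul_sq (p : ℝ[X]) (b x : ℝ) :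
    HasDerivAt (fun y => p.eval y * exp (-(b * y ^ 2)))
      ((derivative p - C (2 * b) * X * p).eval x * exp (-(b * x ^ 2))) x := by
  have hexp : HasDerivAt (fun y => exp (-(b * y ^ 2))) (exp (-(b * x ^ 2)) * -(b * (2 * x))) x := by
    simpa using ((hasDerivAt_pow 2 x).const_mul b).fun_neg.exp
  refine ((p.hasDerivAt x).fun_mul hexp).congr_deriv ?_
  simp only [eval_sub, eval_mul, eval_C, eval_X]
  ring

namespace IsPolyGaussian

variable {b c : ℝ} {f g : ℝ → ℝ}

lemma const_mul (hf : IsPolyGaussian b f) (a : ℝ) : IsPolyGaussian b (fun x => a * f x) := by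
  obtain ⟨p, hp⟩ := hf
  exact ⟨C a * p, fun x => by simp [hp x]; ring⟩

lemma add (hf : IsPolyGaussian b f) (hg : IsPolyGaussian b g) :
    IsPolyGaussian b (fun x => f x + g x) := by
  obtain ⟨p, hp⟩ := hf
  obtain ⟨q, hq⟩ := hg
  exact ⟨p + q, fun x => by simp [hp x, hq x]; ring⟩

lemma sum {ι : Type*} {s : Finset ι} {F : ι → ℝ → ℝ} (h : ∀ i ∈ s, IsPolyGaussian b (F i)) :
    IsPolyGaussian b (fun x => ∑ i ∈ s, F i x) := by
  classical
  induction s using Finset.induction with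
  | empty => exact ⟨0, by simp⟩
  | insert i s hi ih =>
    simp only [Finset.sum_insert hi]
    exact (h i (s.mem_insert_self i)).add (ih fun j hj => h j (Finset.mem_insert_of_mem hj))

lemma poly_mul (hf : IsPolyGaussian b f) (q : ℝ[X]) :
    IsPolyGaussian b (fun x => q.eval x * f x) := by
  obtain ⟨p, hp⟩ := hf
  exact ⟨q * p, fun x => by simp [hp x]; ring⟩

lemma mul (hf : IsPolyGaussian b f) (hg : IsPolyGaussian c g) :
    IsPolyGaussian (b + c) (fun x => f x * g x) := by
  obtain ⟨p, hp⟩ := hf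
  obtain ⟨q, hq⟩ := hg
  refine ⟨p * q, fun x => ?_⟩
  beta_reduce
  rw [hp x, hq x, eval_mul, show -((b + c) * x ^ 2) = -(b * x ^ 2) + -(c * x ^ 2) by ring,
    exp_add]
  ring

lemma id_mul (hf : IsPolyGaussian b f) : IsPolyGaussian b (fun x => x * f x) := by
  simpa using hf.poly_mul X

lemma differentiable (hf : IsPolyGaussian b f) : Differentiable ℝ f := by
  obtain ⟨p, hp⟩ := hf
  obtain rfl : f = _ := funext hp
  exact fun x => (hasDerivAt_eval_mul_exp_neg_mul_sq p b x).differentiableAt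

lemma deriv (hf : IsPolyGaussian b f) : IsPolyGaussian b (deriv f) := by
  obtain ⟨p, hp⟩ := hf
  obtain rfl : f = _ := funext hp
  exact ⟨_, fun x => (hasDerivAt_eval_mul_exp_neg_mul_sq p b x).deriv⟩

lemma continuous (hf : IsPolyGaussian b f) : Continuous f :=
  hf.differentiable.continuous

lemma tendsto_atTop (hb : 0 < b) (hf : IsPolyGaussian b f) : Tendsto f atTop (𝓝 0) := by
  obtain ⟨p, hp⟩ := hf
  -- `|p(x)| e^{-bx²} ≤ |p(x)| e^{-bx}` for `x ≥ 1`, and `p(x) e^{-bx} → 0`.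
  have hdecay : Tendsto (fun x => p.eval x / exp (b * x)) atTop (𝓝 0) := by
    have := (tendsto_div_exp_atTop (p.comp (C b⁻¹ * X))).comp (tendsto_id.const_mul_atTop hb)
    refine this.congr fun x => ?_
    simp [eval_comp, inv_mul_cancel_left₀ hb.ne']
  refine squeeze_zero_norm' ?_ (by simpa using hdecay.abs)
  filter_upwards [eventually_ge_atTop (1 : ℝ)] with x hx
  rw [hp x, norm_mul, norm_eq_abs, abs_div, abs_exp, norm_eq_abs, abs_exp, div_eq_mul_inv,
    ← exp_neg]
  gcongr
  nlinarith

lemma tendsto_atBot (hb : 0 < b) (hf : IsPolyGaussian b f) : Tendsto f atBot (𝓝 0) := by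
  obtain ⟨p, hp⟩ := hf
  have hneg : IsPolyGaussian b (fun y => f (-y)) :=
    ⟨p.comp (-X), fun y => by simp [hp (-y), eval_comp]⟩
  simpa [Function.comp_def] using (hneg.tendsto_atTop hb).comp tendsto_neg_atBot_atTop

lemma isBounded_range (hb : 0 < b) (hf : IsPolyGaussian b f) :
    Bornology.IsBounded (Set.range f) :=
  isBounded_range_of_tendsto_atBot_atTop hf.continuous (hf.tendsto_atBot hb) (hf.tendsto_atTop hb)

lemma integrable (hb : 0 < b) (hf : IsPolyGaussian b f) : Integrable f := by
  obtain ⟨p, hp⟩ := hf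
  have hhalf : IsPolyGaussian (b / 2) (fun x => p.eval x * exp (-(b / 2 * x ^ 2))) :=
    ⟨p, fun _ => rfl⟩
  obtain ⟨C, hC⟩ := (hhalf.isBounded_range (by positivity)).exists_norm_le
  refine ((integrable_exp_neg_mul_sq (half_pos hb)).bdd_mul hhalf.continuous.aestronglyMeasurable
    (.of_forall fun x => hC _ ⟨x, rfl⟩)).congr (.of_forall fun x => ?_)
  rw [hp x]
  beta_reduce
  rw [mul_assoc, ← exp_add]
  ring_nf

lemma integrable_comp_mul {φ : ℝ → ℝ} (hφ : Continuous φ) (hb : 0 < b) (hc : 0 < c)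
    (hf : IsPolyGaussian b f) (hg : IsPolyGaussian c g) :
    Integrable (fun x => φ (f x) * g x) := by
  have hbot := (hφ.tendsto 0).comp (hf.tendsto_atBot hb)
  have htop := (hφ.tendsto 0).comp (hf.tendsto_atTop hb)
  obtain ⟨C, hC⟩ := (isBounded_range_of_tendsto_atBot_atTop (hφ.comp hf.continuous)
    hbot htop).exists_norm_le
  exact (hg.integrable hc).bdd_mul (hφ.comp hf.continuous).aestronglyMeasurable
    (.of_forall fun x => hC _ ⟨x, rfl⟩)

lemma integral_deriv_mul_eq_neg (hbc : 0 < b + c) (hf : IsPolyGaussian b f)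
    (hg : IsPolyGaussian c g) :
    ∫ x, _root_.deriv f x * g x = -∫ x, f x * _root_.deriv g x := by
  rw [integral_mul_deriv_eq_deriv_mul_of_integrable (fun x _ => (hf.differentiable x).hasDerivAt)
    (fun x _ => (hg.differentiable x).hasDerivAt) ((hf.mul hg.deriv).integrable hbc)
    ((hf.deriv.mul hg).integrable hbc) ((hf.mul hg).integrable hbc), neg_neg]

end IsPolyGaussian

lemma integral_deriv_mul_eq_neg_integral_mul_Dx_add {α b c : ℝ} {g w : ℝ → ℝ} (hbc : 0 < b + c)
    (hg : IsPolyGaussian b g) (hw : IsPolyGaussian c w) :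
    ∫ x, deriv g x * w x = -(∫ x, g x * Dx α w x) + α ^ 2 * ∫ x, g x * (x * w x) := by
  have hDx : ∫ x, g x * Dx α w x = (∫ x, g x * deriv w x) + α ^ 2 * ∫ x, g x * (x * w x) := by
    rw [← integral_const_mul, ← integral_add ((hg.mul hw.deriv).integrable hbc)
      (((hg.mul hw.id_mul).integrable hbc).const_mul _)]
    congr 1 with x
    rw [Dx]
    ring
  rw [hg.integral_deriv_mul_eq_neg hbc hw, hDx]
  ring

/-! ### Physicists' Hermite polynomials -/

noncomputable def physHermitePoly : ℕ → ℝ[X]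
  | 0 => 1
  | n + 1 => 2 * X * physHermitePoly n - derivative (physHermitePoly n)

local notation "𝓗" => physHermitePoly

lemma hasDerivAt_physHermitePoly_mul_exp (n : ℕ) (x : ℝ) :
    HasDerivAt (fun y => (𝓗 n).eval y * exp (-(y ^ 2)))
      (-((𝓗 (n + 1)).eval x * exp (-(x ^ 2)))) x := by
  have h := hasDerivAt_eval_mul_exp_neg_mul_sq (𝓗 n) 1 x
  simp only [one_mul] at h
  refine h.congr_deriv ?_
  simp only [physHermitePoly, eval_sub, eval_mul, eval_C, eval_X, eval_ofNat]
  ring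

lemma iteratedDeriv_exp_neg_sq (n : ℕ) (x : ℝ) :
    iteratedDeriv n (fun y => exp (-(y ^ 2))) x = (-1) ^ n * (𝓗 n).eval x * exp (-(x ^ 2)) := by
  induction n generalizing x with
  | zero => simp [physHermitePoly]
  | succ n ih =>
    rw [iteratedDeriv_succ, funext ih]
    simp_rw [mul_assoc]
    rw [deriv_const_mul _ (hasDerivAt_physHermitePoly_mul_exp n x).differentiableAt,
      (hasDerivAt_physHermitePoly_mul_exp n x).deriv]
    ring

lemma physHermite_eq_eval (n : ℕ) (x : ℝ) : physHermite n x = (𝓗 n).eval x := by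
  rw [physHermite, iteratedDeriv_exp_neg_sq]
  calc (-1) ^ n * exp (x ^ 2) * ((-1) ^ n * (𝓗 n).eval x * exp (-(x ^ 2)))
      = ((-1) ^ n * (-1) ^ n) * (exp (x ^ 2) * exp (-(x ^ 2))) * (𝓗 n).eval x := by ring
    _ = (𝓗 n).eval x := by rw [← mul_pow, ← exp_add]; simp

lemma derivative_physHermitePoly (n : ℕ) : derivative (𝓗 n) = 2 * (n : ℝ[X]) * 𝓗 (n - 1) := by
  induction n with
  | zero => simp [physHermitePoly]
  | succ n ih =>
    cases n with
    | zero => simp [physHermitePoly]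
    | succ n =>
      rw [physHermitePoly, derivative_sub, derivative_mul, ih]
      simp only [physHermitePoly, Nat.add_sub_cancel, derivative_mul, derivative_ofNat,
        derivative_X, derivative_natCast]
      push_cast
      ring

lemma two_mul_X_mul_physHermitePoly (n : ℕ) :
    2 * X * 𝓗 n = 𝓗 (n + 1) + 2 * (n : ℝ[X]) * 𝓗 (n - 1) := by
  rw [physHermitePoly, derivative_physHermitePoly]
  ring

lemma iterate_derivative_physHermitePoly (k j : ℕ) :
    derivative^[k] (𝓗 j) = C (2 ^ k * (j.descFactorial k : ℝ)) * 𝓗 (j - k) := by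
  induction k generalizing j with
  | zero => simp
  | succ k ih =>
    rw [Function.iterate_succ_apply, derivative_physHermitePoly,
      show (2 : ℝ[X]) * (j : ℝ[X]) = C (2 * (j : ℝ)) by rw [C_mul, map_ofNat, map_natCast],
      iterate_derivative_C_mul, ih, ← mul_assoc, ← C_mul, Nat.sub_sub, add_comm 1 k]
    congr 2
    cases j with
    | zero => simp
    | succ j => rw [Nat.succ_descFactorial_succ]; push_cast; ring

lemma integral_eval_mul_physHermitePoly_succ_mul_exp (p : ℝ[X]) (r : ℕ) :
    ∫ x, p.eval x * ((𝓗 (r + 1)).eval x * exp (-(x ^ 2)))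
      = ∫ x, (derivative p).eval x * ((𝓗 r).eval x * exp (-(x ^ 2))) := by
  have hp : IsPolyGaussian 0 (fun x => p.eval x) := ⟨p, by simp⟩
  have hH : IsPolyGaussian 1 (fun x => (𝓗 r).eval x * exp (-(x ^ 2))) := ⟨𝓗 r, by simp⟩
  have h := hp.integral_deriv_mul_eq_neg (by norm_num) hH
  rw [funext fun x => Polynomial.deriv (x := x) p,
    funext fun x => (hasDerivAt_physHermitePoly_mul_exp r x).deriv] at h
  rw [h, ← integral_neg]
  simp

lemma integral_eval_mul_physHermitePoly_mul_exp (p : ℝ[X]) (r : ℕ) :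
    ∫ x, p.eval x * ((𝓗 r).eval x * exp (-(x ^ 2)))
      = ∫ x, (derivative^[r] p).eval x * exp (-(x ^ 2)) := by
  induction r generalizing p with
  | zero => simp [physHermitePoly]
  | succ r ih =>
    rw [integral_eval_mul_physHermitePoly_succ_mul_exp, ih, Function.iterate_succ_apply]

theorem integral_physHermitePoly_mul_physHermitePoly_mul_exp (j k : ℕ) :
    ∫ x, (𝓗 j).eval x * (𝓗 k).eval x * exp (-(x ^ 2))
      = if j = k then 2 ^ k * k.factorial * √π else 0 := by
  -- Integrating by parts `k` times moves all derivatives onto `𝓗 j`, which they kill if `j < k`.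
  have key (j k : ℕ) (hjk : j ≤ k) : ∫ x, (𝓗 j).eval x * (𝓗 k).eval x * exp (-(x ^ 2))
      = if j = k then 2 ^ k * k.factorial * √π else 0 := by
    simp_rw [mul_assoc]
    rw [integral_eval_mul_physHermitePoly_mul_exp, iterate_derivative_physHermitePoly]
    rcases hjk.lt_or_eq with hlt | rfl
    · simp [Nat.descFactorial_eq_zero_iff_lt.2 hlt, hlt.ne]
    · have hgauss : ∫ x, exp (-(x ^ 2)) = √π := by simpa using integral_gaussian 1
      simp [physHermitePoly, Nat.descFactorial_self, integral_const_mul, hgauss, mul_assoc]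
  rcases le_total j k with hjk | hkj
  · exact key j k hjk
  · simp_rw [mul_comm ((𝓗 j).eval _) ((𝓗 k).eval _)]
    rw [key k j hkj]
    by_cases h : j = k
    · subst h; rfl
    · simp [h, Ne.symm h]

/-! ### Hermite functions and finite Hermite expansions -/

noncomputable def hermiteNormConst (α : ℝ) (k : ℕ) : ℝ := √(α / (2 ^ k * k.factorial * √π))

lemma genHermite_eq (α : ℝ) (k : ℕ) (x : ℝ) :
    genHermite α k x = hermiteNormConst α k * (𝓗 k).eval (α * x) * exp (-(α ^ 2 * x ^ 2) / 2) := by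
  rw [genHermite, physHermite_eq_eval, hermiteNormConst]

lemma isPolyGaussian_genHermite (α : ℝ) (k : ℕ) : IsPolyGaussian (α ^ 2 / 2) (genHermite α k) :=
  ⟨C (hermiteNormConst α k) * (𝓗 k).comp (C α * X), fun x => by
    rw [genHermite_eq]; simp only [eval_mul, eval_C, eval_comp, eval_X]; ring_nf⟩

section genHermite

variable {α : ℝ} (hα : 0 < α)
include hα

lemma hermiteNormConst_succ_mul (k : ℕ) :
    hermiteNormConst α (k + 1) * √(2 * (k + 1)) = hermiteNormConst α k := by
  rw [hermiteNormConst, hermiteNormConst, ← sqrt_mul (by positivity)]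
  congr 1
  have : (0 : ℝ) < √π := sqrt_pos.2 pi_pos
  rw [Nat.factorial_succ]
  push_cast
  field_simp
  ring

lemma hermiteNormConst_mul_two_mul (k : ℕ) :
    hermiteNormConst α k * (2 * k) = √(2 * k) * hermiteNormConst α (k - 1) := by
  cases k with
  | zero => simp
  | succ k =>
    rw [Nat.add_sub_cancel, ← hermiteNormConst_succ_mul hα k]
    push_cast
    linear_combination
      (-hermiteNormConst α (k + 1)) * mul_self_sqrt (by positivity : (0 : ℝ) ≤ 2 * (k + 1))

lemma hasDerivAt_genHermite (k : ℕ) (x : ℝ) :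
    HasDerivAt (genHermite α k)
      (α * √(2 * k) * genHermite α (k - 1) x - α ^ 2 * x * genHermite α k x) x := by
  have hpoly : HasDerivAt (fun y => (𝓗 k).eval (α * y)) ((derivative (𝓗 k)).eval (α * x) * α) x :=
    ((𝓗 k).hasDerivAt (α * x)).comp x (by simpa using (hasDerivAt_id x).const_mul α)
  have hexp : HasDerivAt (fun y => exp (-(α ^ 2 * y ^ 2) / 2))
      (exp (-(α ^ 2 * x ^ 2) / 2) * (-(α ^ 2 * (2 * x)) / 2)) x := by
    simpa using (((hasDerivAt_pow 2 x).const_mul (α ^ 2)).fun_neg.div_const 2).exp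
  have h := (hpoly.const_mul (hermiteNormConst α k)).fun_mul hexp
  rw [show (fun y => hermiteNormConst α k * (𝓗 k).eval (α * y) * exp (-(α ^ 2 * y ^ 2) / 2))
    = genHermite α k from funext fun y => (genHermite_eq α k y).symm] at h
  refine h.congr_deriv ?_
  rw [genHermite_eq, genHermite_eq, derivative_physHermitePoly]
  simp only [eval_mul, eval_ofNat, eval_natCast]
  linear_combination (α * (𝓗 (k - 1)).eval (α * x) * exp (-(α ^ 2 * x ^ 2) / 2)) *
    hermiteNormConst_mul_two_mul hα k

lemma mul_genHermite (k : ℕ) (x : ℝ) :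
    α ^ 2 * x * genHermite α k x = α / 2 *
      (√(2 * (k + 1)) * genHermite α (k + 1) x + √(2 * k) * genHermite α (k - 1) x) := by
  have hrec : 2 * (α * x) * (𝓗 k).eval (α * x)
      = (𝓗 (k + 1)).eval (α * x) + 2 * k * (𝓗 (k - 1)).eval (α * x) := by
    simpa using congrArg (eval (α * x)) (two_mul_X_mul_physHermitePoly k)
  rw [genHermite_eq, genHermite_eq, genHermite_eq]
  linear_combination (α / 2 * exp (-(α ^ 2 * x ^ 2) / 2)) *
    (hermiteNormConst α k * hrec - (𝓗 (k + 1)).eval (α * x) * hermiteNormConst_succ_mul hα k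
      + (𝓗 (k - 1)).eval (α * x) * hermiteNormConst_mul_two_mul hα k)

theorem integral_genHermite_mul_genHermite (j k : ℕ) :
    ∫ x, genHermite α j x * genHermite α k x = if j = k then 1 else 0 := by
  have hpt (x : ℝ) : genHermite α j x * genHermite α k x = hermiteNormConst α j *
      hermiteNormConst α k * ((𝓗 j).eval (α * x) * (𝓗 k).eval (α * x) * exp (-(α * x) ^ 2)) := by
    rw [genHermite_eq, genHermite_eq,
      show -(α * x) ^ 2 = -(α ^ 2 * x ^ 2) / 2 + -(α ^ 2 * x ^ 2) / 2 by ring, exp_add]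
    ring
  simp_rw [hpt]
  rw [integral_const_mul, Measure.integral_comp_mul_left
    (fun y => (𝓗 j).eval y * (𝓗 k).eval y * exp (-y ^ 2)),
    integral_physHermitePoly_mul_physHermitePoly_mul_exp]
  split_ifs with h
  · subst h
    have hc : hermiteNormConst α j * hermiteNormConst α j = α / (2 ^ j * j.factorial * √π) :=
      mul_self_sqrt (by positivity)
    have : (0 : ℝ) < √π := sqrt_pos.2 pi_pos
    rw [hc, abs_of_pos (inv_pos.2 hα), smul_eq_mul]
    field_simp
  · simp

end genHermite

noncomputable def hermiteSum (α : ℝ) (a : ℕ → ℝ) (M : ℕ) : ℝ → ℝ :=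
  fun x => ∑ k ∈ Finset.range M, a k * genHermite α k x

/-- `hermiteSpace α (N + 1)` is the paper's `R_N`. -/
noncomputable def hermiteSpace (α : ℝ) (M : ℕ) : Submodule ℝ (ℝ → ℝ) where
  carrier := {v | ∃ a, hermiteSum α a M = v}
  add_mem' := by
    rintro _ _ ⟨a, rfl⟩ ⟨b, rfl⟩
    exact ⟨a + b, by ext x; simp [hermiteSum, add_mul, Finset.sum_add_distrib]⟩
  zero_mem' := ⟨0, by ext; simp [hermiteSum]⟩
  smul_mem' := by
    rintro c _ ⟨a, rfl⟩
    exact ⟨c • a, by ext; simp [hermiteSum, Finset.mul_sum, mul_assoc]⟩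

/-- `hermiteProj α (N + 1)` is the paper's `P_N`. -/
noncomputable def hermiteProj (α : ℝ) (M : ℕ) (g : ℝ → ℝ) : ℝ → ℝ :=
  hermiteSum α (fun n => ∫ y, g y * genHermite α n y) M

lemma genHermite_mem_hermiteSpace (α : ℝ) {k M : ℕ} (hk : k < M) :
    genHermite α k ∈ hermiteSpace α M := by
  classical
  refine ⟨Pi.single k 1, funext fun x => ?_⟩
  simp [hermiteSum, Pi.single_apply, Finset.mem_range.2 hk]

lemma isPolyGaussian_hermiteSum (α : ℝ) (a : ℕ → ℝ) (M : ℕ) :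
    IsPolyGaussian (α ^ 2 / 2) (hermiteSum α a M) :=
  IsPolyGaussian.sum fun k _ => (isPolyGaussian_genHermite α k).const_mul (a k)

section hermiteSum

variable {α : ℝ} (hα : 0 < α)
include hα

lemma hasDerivAt_hermiteSum (a : ℕ → ℝ) (M : ℕ) (x : ℝ) :
    HasDerivAt (hermiteSum α a M) (∑ k ∈ Finset.range M,
      a k * (α * √(2 * k) * genHermite α (k - 1) x - α ^ 2 * x * genHermite α k x)) x :=
  HasDerivAt.fun_sum fun k _ => (hasDerivAt_genHermite hα k x).const_mul (a k)

lemma deriv_hermiteSum_mem_hermiteSpace (a : ℕ → ℝ) (M : ℕ) :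
    deriv (hermiteSum α a M) ∈ hermiteSpace α (M + 1) := by
  have hderiv : deriv (hermiteSum α a M) = ∑ k ∈ Finset.range M, a k •
      ((α / 2 * √(2 * k)) • genHermite α (k - 1)
        - (α / 2 * √(2 * (k + 1))) • genHermite α (k + 1)) := by
    ext x
    rw [(hasDerivAt_hermiteSum hα a M x).deriv]
    simp only [Finset.sum_apply, Pi.smul_apply, Pi.sub_apply, smul_eq_mul, mul_genHermite hα]
    exact Finset.sum_congr rfl fun k _ => by ring
  rw [hderiv]
  refine Submodule.sum_mem _ fun k hk => Submodule.smul_mem _ _ (Submodule.sub_mem _ ?_ ?_) <;>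
    refine Submodule.smul_mem _ _ (genHermite_mem_hermiteSpace α ?_) <;>
    have := Finset.mem_range.1 hk <;> omega

lemma Dx_hermiteSum (a : ℕ → ℝ) (M : ℕ) :
    Dx α (hermiteSum α a (M + 1)) = hermiteSum α (fun k => α * √(2 * (k + 1)) * a (k + 1)) M := by
  ext x
  rw [Dx, (hasDerivAt_hermiteSum hα a (M + 1) x).deriv,
    hermiteSum, Finset.mul_sum, ← Finset.sum_add_distrib, Finset.sum_range_succ']
  simp only [hermiteSum, CharP.cast_eq_zero, mul_zero, sqrt_zero, zero_mul, zero_sub,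
    Nat.add_sub_cancel]
  push_cast
  rw [show a 0 * -(α ^ 2 * x * genHermite α 0 x) + α ^ 2 * x * (a 0 * genHermite α 0 x) = 0 by
    ring, add_zero]
  exact Finset.sum_congr rfl fun k _ => by ring

lemma integral_eval_mul_hermiteSum_mul_hermiteSum (p : ℝ[X]) (a b : ℕ → ℝ) (M M' : ℕ) :
    ∫ x, p.eval x * (hermiteSum α a M x * hermiteSum α b M' x)
      = ∑ j ∈ Finset.range M, ∑ k ∈ Finset.range M',
          a j * b k * ∫ x, p.eval x * (genHermite α j x * genHermite α k x) := by
  have hint (j k : ℕ) : Integrable fun x => p.eval x * (genHermite α j x * genHermite α k x) :=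
    (((isPolyGaussian_genHermite α j).mul (isPolyGaussian_genHermite α k)).poly_mul p).integrable
      (by positivity)
  have hexpand : (fun x => p.eval x * (hermiteSum α a M x * hermiteSum α b M' x)) = fun x =>
      ∑ j ∈ Finset.range M, ∑ k ∈ Finset.range M',
        a j * b k * (p.eval x * (genHermite α j x * genHermite α k x)) := by
    ext x
    simp only [hermiteSum]
    rw [Finset.sum_mul_sum, Finset.mul_sum]
    refine Finset.sum_congr rfl fun j _ => ?_
    rw [Finset.mul_sum]
    exact Finset.sum_congr rfl fun k _ => by ring
  rw [hexpand, integral_finsetSum _ fun j _ => integrable_finsetSum _ fun k _ =>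
    (hint j k).const_mul (a j * b k)]
  refine Finset.sum_congr rfl fun j _ => ?_
  rw [integral_finsetSum _ fun k _ => (hint j k).const_mul (a j * b k)]
  exact Finset.sum_congr rfl fun k _ => integral_const_mul _ _

lemma integral_hermiteSum_mul_hermiteSum (a b : ℕ → ℝ) (M : ℕ) :
    ∫ x, hermiteSum α a M x * hermiteSum α b M x = ∑ k ∈ Finset.range M, a k * b k := by
  have h := integral_eval_mul_hermiteSum_mul_hermiteSum hα 1 a b M M
  simp only [eval_one, one_mul, integral_genHermite_mul_genHermite hα, mul_ite, mul_one, mul_zero,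
    Finset.sum_ite_eq, Finset.mem_range] at h
  rw [h]
  exact Finset.sum_congr rfl fun k hk => if_pos (Finset.mem_range.1 hk)

lemma integral_hermiteSum_sq (a : ℕ → ℝ) (M : ℕ) :
    ∫ x, hermiteSum α a M x ^ 2 = ∑ k ∈ Finset.range M, a k ^ 2 := by
  simp_rw [sq, integral_hermiteSum_mul_hermiteSum hα]

lemma integral_hermiteProj_mul {g v : ℝ → ℝ} {M : ℕ}
    (hg : ∀ n, Integrable fun x => g x * genHermite α n x) (hv : v ∈ hermiteSpace α M) :
    ∫ x, hermiteProj α M g x * v x = ∫ x, g x * v x := by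
  obtain ⟨b, rfl⟩ := hv
  rw [hermiteProj, integral_hermiteSum_mul_hermiteSum hα]
  simp_rw [hermiteSum, Finset.mul_sum]
  rw [integral_finsetSum _ fun k _ => by simpa [mul_left_comm] using (hg k).const_mul (b k)]
  refine Finset.sum_congr rfl fun k _ => ?_
  rw [mul_comm, ← integral_const_mul]
  congr 1 with x
  ring

lemma continuousOn_integral_eval_mul_hermiteSum_mul_hermiteSum (p : ℝ[X])
    {a b : ℝ → ℕ → ℝ} {M M' : ℕ} {s : Set ℝ} (ha : ∀ k < M, ContinuousOn (a · k) s)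
    (hb : ∀ k < M', ContinuousOn (b · k) s) :
    ContinuousOn (fun t => ∫ x, p.eval x * (hermiteSum α (a t) M x * hermiteSum α (b t) M' x))
      s := by
  simp_rw [integral_eval_mul_hermiteSum_mul_hermiteSum hα]
  exact continuousOn_finsetSum _ fun j hj => continuousOn_finsetSum _ fun k hk =>
    ((ha j (Finset.mem_range.1 hj)).mul (hb k (Finset.mem_range.1 hk))).mul continuousOn_const

lemma continuousOn_integral_sq_Dx_hermiteSum {a : ℝ → ℕ → ℝ} {M : ℕ} {s : Set ℝ}
    (ha : ∀ k < M, ContinuousOn (a · (k + 1)) s) :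
    ContinuousOn (fun t => ∫ x, Dx α (hermiteSum α (a t) (M + 1)) x ^ 2) s := by
  have hb (k : ℕ) (hk : k < M) : ContinuousOn (fun t => α * √(2 * (k + 1)) * a t (k + 1)) s :=
    continuousOn_const.mul (ha k hk)
  simpa [Dx_hermiteSum hα, sq] using
    continuousOn_integral_eval_mul_hermiteSum_mul_hermiteSum hα 1 hb hb

lemma continuousOn_integral_sq_id_mul_hermiteSum {a : ℝ → ℕ → ℝ} {M : ℕ} {s : Set ℝ}
    (ha : ∀ k < M, ContinuousOn (a · k) s) :
    ContinuousOn (fun t => ∫ x, (x * hermiteSum α (a t) M x) ^ 2) s := by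
  refine (continuousOn_integral_eval_mul_hermiteSum_mul_hermiteSum hα (X ^ 2) ha ha).congr
    fun t _ => ?_
  simp only [eval_pow, eval_X]
  congr 1 with x
  ring

end hermiteSum

/-! ### The scheme -/

lemma mem_Icc_of_viscosity_bounds {m N : ℕ} {q : ℕ → ℝ} (hq0 : ∀ k ≤ N, k ≤ m → q k = 0)
    (hq1 : ∀ k ≤ N, m < k → 1 - (m : ℝ) / k ≤ q k ∧ q k < 1) {k : ℕ} (hk : k ≤ N) :
    q k ∈ Set.Icc 0 1 := by
  rcases le_or_gt k m with hkm | hmk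
  · simp [hq0 k hk hkm]
  · obtain ⟨hlow, hup⟩ := hq1 k hk hmk
    have : (m : ℝ) / k ≤ 1 := div_le_one_of_le₀ (by exact_mod_cast hmk.le) (by positivity)
    exact ⟨by linarith, hup.le⟩

section scheme

variable {α : ℝ} (hα : 0 < α)
include hα

lemma integral_deriv_hermiteProj_comp_mul_eq_zero {φ : ℝ → ℝ} (hφ : Continuous φ)
    (a : ℕ → ℝ) (M : ℕ) :
    ∫ x, deriv (hermiteProj α (M + 1) (fun y => φ (hermiteSum α a M y))) x * hermiteSum α a M x
      = 0 := by
  have hb : 0 < α ^ 2 / 2 := by positivity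
  have hu := isPolyGaussian_hermiteSum α a M
  have hP : IsPolyGaussian (α ^ 2 / 2) (hermiteProj α (M + 1) (fun y => φ (hermiteSum α a M y))) :=
    isPolyGaussian_hermiteSum α _ _
  rw [hP.integral_deriv_mul_eq_neg (by positivity) hu,
    integral_hermiteProj_mul hα
      (fun n => hu.integrable_comp_mul hφ hb hb (isPolyGaussian_genHermite α n))
      (deriv_hermiteSum_mem_hermiteSpace hα a M),
    integral_comp_mul_deriv_eq_zero hφ hu.differentiable (hu.tendsto_atBot hb)
      (hu.tendsto_atTop hb) (hu.integrable_comp_mul hφ hb hb hu.deriv), neg_zero]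

lemma integral_sq_Dx_le_integral_Dx_mul_Dx {a q : ℕ → ℝ} {M : ℕ}
    (hq : ∀ k < M, q (k + 1) ∈ Set.Icc 0 1) :
    ∫ x, Dx α (hermiteSum α (fun k => q k * a k) (M + 1)) x ^ 2
      ≤ ∫ x, Dx α (hermiteSum α (fun k => q k * a k) (M + 1)) x *
          Dx α (hermiteSum α a (M + 1)) x := by
  simp_rw [sq, Dx_hermiteSum hα, integral_hermiteSum_mul_hermiteSum hα]
  refine Finset.sum_le_sum fun k hk => ?_
  obtain ⟨h0, h1⟩ := hq k (Finset.mem_range.1 hk)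
  have : 0 ≤ q (k + 1) * (1 - q (k + 1)) * (α * √(2 * (k + 1)) * a (k + 1)) ^ 2 := by
    have : 0 ≤ 1 - q (k + 1) := by linarith
    positivity
  linarith

lemma energy_deriv_le_of_scheme {ε γ : ℝ} (hε : 0 ≤ ε) (hγ : 0 < γ) {φ : ℝ → ℝ}
    (hφ : Continuous φ) {q a a' : ℕ → ℝ} {M : ℕ} (hq : ∀ k < M, q (k + 1) ∈ Set.Icc 0 1)
    (hs : (∫ x, hermiteSum α a' (M + 1) x * hermiteSum α a (M + 1) x)
      + (∫ x, deriv (hermiteProj α (M + 2) (fun y => φ (hermiteSum α a (M + 1) y))) x *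
          hermiteSum α a (M + 1) x)
      - ε * (∫ x, deriv (Dx α (hermiteSum α (fun k => q k * a k) (M + 1))) x *
          hermiteSum α a (M + 1) x) = 0) :
    2 * ∑ k ∈ Finset.range (M + 1), a k * a' k
      ≤ -(2 * ε * (1 - α ^ 2 / (2 * γ))) *
          (∫ x, Dx α (hermiteSum α (fun k => q k * a k) (M + 1)) x ^ 2)
        + ε * α ^ 2 * γ * ∫ x, (x * hermiteSum α a (M + 1) x) ^ 2 := by
  set u := hermiteSum α a (M + 1)
  set V := Dx α (hermiteSum α (fun k => q k * a k) (M + 1))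
  have hb : 0 < α ^ 2 / 2 + α ^ 2 / 2 := by positivity
  have hu : IsPolyGaussian (α ^ 2 / 2) u := isPolyGaussian_hermiteSum α a (M + 1)
  have hV : IsPolyGaussian (α ^ 2 / 2) V := by
    simp only [V, Dx_hermiteSum hα]
    exact isPolyGaussian_hermiteSum α _ M
  have hlin : ∫ x, hermiteSum α a' (M + 1) x * u x = ∑ k ∈ Finset.range (M + 1), a k * a' k := by
    rw [integral_hermiteSum_mul_hermiteSum hα]
    exact Finset.sum_congr rfl fun k _ => mul_comm _ _
  rw [hlin, integral_deriv_hermiteProj_comp_mul_eq_zero hα hφ a (M + 1),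
    integral_deriv_mul_eq_neg_integral_mul_Dx_add (α := α) hb hV hu] at hs
  have hdiss : ∫ x, V x ^ 2 ≤ ∫ x, V x * Dx α u x := integral_sq_Dx_le_integral_Dx_mul_Dx hα hq
  have hyoung := integral_mul_le_of_young hγ ((hV.mul hu.id_mul).integrable hb)
    (by simpa only [sq] using (hV.mul hV).integrable hb)
    (by simpa only [sq] using (hu.id_mul.mul hu.id_mul).integrable hb)
  have hrate : ∑ k ∈ Finset.range (M + 1), a k * a' k
      = ε * (-(∫ x, V x * Dx α u x) + α ^ 2 * ∫ x, V x * (x * u x)) := by linarith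
  have hrhs : -(2 * ε * (1 - α ^ 2 / (2 * γ))) * (∫ x, V x ^ 2) + ε * α ^ 2 * γ * ∫ x, (x * u x) ^ 2
      = 2 * (ε * (-(∫ x, V x ^ 2) + α ^ 2 *
          (1 / (2 * γ) * (∫ x, V x ^ 2) + γ / 2 * ∫ x, (x * u x) ^ 2))) := by
    field_simp
    ring
  rw [hrate, hrhs]
  gcongr

end scheme

theorem energy_estimate_Q_general (α T ε : ℝ) (hα : 0 < α) (hT : 0 < T) (hε : 0 < ε)
    (m N : ℕ)
    (q : ℕ → ℝ) (hq0 : ∀ k ≤ N, k ≤ m → q k = 0)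
    (hq1 : ∀ k ≤ N, m < k → 1 - (m : ℝ) / (k : ℝ) ≤ q k ∧ q k < 1)
    (f : ℝ → ℝ) (hf : ContDiff ℝ 1 f)
    (u₀ : ℝ → ℝ)
    (uh uh' : ℕ → ℝ → ℝ)
    (huh : ∀ k ≤ N, ∀ t ∈ Set.Icc (0 : ℝ) T, HasDerivAt (uh k) (uh' k t) t)
    (u : ℝ → ℝ → ℝ)
    (hu : u = fun t x => ∑ k ∈ Finset.range (N + 1), uh k t * genHermite α k x)
    (hinit : ∀ x : ℝ, u 0 x
      = ∑ n ∈ Finset.range (N + 1), (∫ y : ℝ, u₀ y * genHermite α n y) * genHermite α n x)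
    (hscheme : ∀ t ∈ Set.Icc (0 : ℝ) T, ∀ c : ℕ → ℝ,
      (∫ x : ℝ, (∑ k ∈ Finset.range (N + 1), uh' k t * genHermite α k x) *
          (∑ j ∈ Finset.range (N + 1), c j * genHermite α j x))
        + (∫ x : ℝ, deriv (fun z => ∑ n ∈ Finset.range (N + 2),
              (∫ y : ℝ, f (u t y) * genHermite α n y) * genHermite α n z) x *
            (∑ j ∈ Finset.range (N + 1), c j * genHermite α j x))
        - ε * (∫ x : ℝ, deriv (Dx α (fun z => ∑ k ∈ Finset.range (N + 1),
              q k * uh k t * genHermite α k z)) x *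
            (∑ j ∈ Finset.range (N + 1), c j * genHermite α j x)) = 0) :
    ∀ γ : ℝ, α ^ 2 / 2 < γ →
      (∫ x : ℝ, (u T x) ^ 2)
          + 2 * ε * (1 - α ^ 2 / (2 * γ)) *
            ∫ t in (0 : ℝ)..T, ∫ x : ℝ, (Dx α (fun z => ∑ k ∈ Finset.range (N + 1),
              q k * uh k t * genHermite α k z) x) ^ 2
        ≤ (∫ x : ℝ, (∑ n ∈ Finset.range (N + 1),
              (∫ y : ℝ, u₀ y * genHermite α n y) * genHermite α n x) ^ 2)
          + ε * α ^ 2 * γ * ∫ t in (0 : ℝ)..T, ∫ x : ℝ, (x * u t x) ^ 2 := by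
  intro γ hγ_gt
  subst hu
  have hγ : 0 < γ := (by positivity : (0 : ℝ) ≤ α ^ 2 / 2).trans_lt hγ_gt
  have huhc (k : ℕ) (hk : k ≤ N) : ContinuousOn (uh k) (Set.Icc 0 T) := fun t ht =>
    (huh k hk t ht).continuousAt.continuousWithinAt
  have hW₁ := continuousOn_integral_sq_Dx_hermiteSum hα (a := fun t k => q k * uh k t)
    fun k hk => continuousOn_const.mul (huhc (k + 1) hk)
  have hW₂ := continuousOn_integral_sq_id_mul_hermiteSum hα (a := fun t k => uh k t) (M := N + 1)
    fun k hk => huhc k (Nat.lt_succ_iff.1 hk)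
  have henergy (t : ℝ) (ht : t ∈ Set.Icc 0 T) : HasDerivAt
      (fun s => ∑ k ∈ Finset.range (N + 1), uh k s ^ 2)
      (2 * ∑ k ∈ Finset.range (N + 1), uh k t * uh' k t) t := by
    rw [Finset.mul_sum]
    exact HasDerivAt.fun_sum fun k hk => by
      simpa [mul_assoc] using (huh k (Finset.mem_range_succ_iff.1 hk) t ht).fun_pow 2
  have hmain := intervalIntegral.sub_le_integral_of_hasDeriv_right_of_le hT.le
    (fun t ht => (henergy t ht).continuousAt.continuousWithinAt)
    (fun t ht => (henergy t (Set.Ioo_subset_Icc_self ht)).hasDerivWithinAt)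
    ((hW₁.const_mul _).add (hW₂.const_mul _)).integrableOn_Icc
    fun t ht => energy_deriv_le_of_scheme hα hε.le hγ hf.continuous
      (fun k hk => mem_Icc_of_viscosity_bounds hq0 hq1 hk)
      (hscheme t (Set.Ioo_subset_Icc_self ht) (uh · t))
  simp only [Pi.add_apply] at hmain
  rw [intervalIntegral.integral_add ((hW₁.const_mul _).intervalIntegrable_of_Icc hT.le)
      ((hW₂.const_mul _).intervalIntegrable_of_Icc hT.le), intervalIntegral.integral_const_mul,
    intervalIntegral.integral_const_mul, ← integral_hermiteSum_sq hα, ← integral_hermiteSum_sq hα]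
    at hmain
  simp_rw [← hinit]
  unfold hermiteSum at hmain
  linarith

/-- energy estimate for the Hermite spectral viscosity scheme with
viscosity term `ε ∂_x D_x Q_m u`: if `u(t) = Σ_{k=0}^N uh_k(t) H_k^α` solves the scheme
weakly against every `φ ∈ R_N` on `[0,T]` with initial datum `P_N u₀`, then for every
`γ > α²/2`,
`‖u(T)‖² + 2ε(1 − α²/(2γ)) ∫₀ᵀ ‖D_x Q_m u(t)‖² dt
  ≤ ‖P_N u₀‖² + ε α² γ ∫₀ᵀ ‖x u(t)‖² dt`. -/
theorem energy_estimate_Q (α T ε : ℝ) (hα : 0 < α) (hT : 0 < T) (hε : 0 < ε)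
    (m N : ℕ) (hm : 0 < m) (hmN : m < N)
    (q : ℕ → ℝ) (hq0 : ∀ k ≤ N, k ≤ m → q k = 0)
    (hq1 : ∀ k ≤ N, m < k → 1 - (m : ℝ) / (k : ℝ) ≤ q k ∧ q k < 1)
    (f : ℝ → ℝ) (hf : ContDiff ℝ 1 f) (hf0 : f 0 = 0)
    (F : ℝ → ℝ) (hF : ∀ y : ℝ, HasDerivAt F (y * deriv f y) y)
    (u₀ : ℝ → ℝ) (hu₀ : MemLp u₀ 2 (volume : Measure ℝ))
    (uh uh' : ℕ → ℝ → ℝ)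
    (huh : ∀ k ≤ N, ∀ t ∈ Set.Icc (0 : ℝ) T, HasDerivAt (uh k) (uh' k t) t)
    (u : ℝ → ℝ → ℝ)
    (hu : u = fun t x => ∑ k ∈ Finset.range (N + 1), uh k t * genHermite α k x)
    (hinit : ∀ x : ℝ, u 0 x
      = ∑ n ∈ Finset.range (N + 1), (∫ y : ℝ, u₀ y * genHermite α n y) * genHermite α n x)
    (hscheme : ∀ t ∈ Set.Icc (0 : ℝ) T, ∀ c : ℕ → ℝ,
      (∫ x : ℝ, (∑ k ∈ Finset.range (N + 1), uh' k t * genHermite α k x) *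
          (∑ j ∈ Finset.range (N + 1), c j * genHermite α j x))
        + (∫ x : ℝ, deriv (fun z => ∑ n ∈ Finset.range (N + 2),
              (∫ y : ℝ, f (u t y) * genHermite α n y) * genHermite α n z) x *
            (∑ j ∈ Finset.range (N + 1), c j * genHermite α j x))
        - ε * (∫ x : ℝ, deriv (Dx α (fun z => ∑ k ∈ Finset.range (N + 1),
              q k * uh k t * genHermite α k z)) x *
            (∑ j ∈ Finset.range (N + 1), c j * genHermite α j x)) = 0) :
    ∀ γ : ℝ, α ^ 2 / 2 < γ →
      (∫ x : ℝ, (u T x) ^ 2)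
          + 2 * ε * (1 - α ^ 2 / (2 * γ)) *
            ∫ t in (0 : ℝ)..T, ∫ x : ℝ, (Dx α (fun z => ∑ k ∈ Finset.range (N + 1),
              q k * uh k t * genHermite α k z) x) ^ 2
        ≤ (∫ x : ℝ, (∑ n ∈ Finset.range (N + 1),
              (∫ y : ℝ, u₀ y * genHermite α n y) * genHermite α n x) ^ 2)
          + ε * α ^ 2 * γ * ∫ t in (0 : ℝ)..T, ∫ x : ℝ, (x * u t x) ^ 2 :=
  energy_estimate_Q_general α T ε hα hT hε m N q hq0 hq1 f hf u₀ uh uh' huh u hu hinit hscheme
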